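/- Let G be a bipartite graph with a perfect matching and let S(G) be its complete subdivision. Then χ_pcf(S(G)) ≤ 4. -/
import Mathlib


open SimpleGraph

/-- A proper conflict-free coloring: proper, and every non-isolated vertex has a color
appearing exactly once in its open neighborhood. -/
def IsPCFColoring {V : Type*} (G : SimpleGraph V) {n : ℕ} (c : V → Fin n) : Prop :=
  (∀ u v, G.Adj u v → c u ≠ c v) ∧
  ∀ v : V, (G.neighborSet v).Nonempty →
    ∃ k : Fin n, ∃! u, u ∈ G.neighborSet v ∧ c u = k

/-- The PCF chromatic number. -/
noncomputable def pcfChromNum {V : Type*} (G : SimpleGraph V) : ℕ :=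
  sInf {n | ∃ c : V → Fin n, IsPCFColoring G c}

/-- The chromatic number (as a natural number). -/
noncomputable def chromNum {V : Type*} (G : SimpleGraph V) : ℕ :=
  sInf {n | G.Colorable n}
/-- The complete subdivision of a graph: every edge subdivided exactly once. -/
def subdiv {V : Type*} (G : SimpleGraph V) : SimpleGraph (V ⊕ G.edgeSet) :=
  SimpleGraph.fromRel (fun a b => match a, b with
    | Sum.inl v, Sum.inr e => v ∈ (e : Sym2 V)
    | _, _ => False)
theorem pcf_subdiv_bipartite_perfectMatching {V : Type*} [Fintype V] (G : SimpleGraph V)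
    (hbip : G.Colorable 2) (hM : ∃ M : G.Subgraph, M.IsPerfectMatching) :
    pcfChromNum (subdiv G) ≤ 4 := by
  classical
  obtain ⟨M, hmatch, hspan⟩ := hM
  obtain ⟨φ⟩ := hbip
  set c : V ⊕ G.edgeSet → Fin 4 := fun x => match x with
    | Sum.inl v => ⟨(φ v).val, by have := (φ v).isLt; omega⟩
    | Sum.inr e => if (e : Sym2 V) ∈ M.edgeSet then 2 else 3
    with hc
  have hcl : ∀ v : V, (c (Sum.inl v)).val < 2 := fun v => (φ v).isLt
  have hcr : ∀ e : G.edgeSet, 2 ≤ (c (Sum.inr e)).val := by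
    intro e
    simp only [hc]
    split <;> decide
  apply Nat.sInf_le
  refine ⟨c, ?_, ?_⟩
  · rintro (u|u) (v|v) h
    · simp [subdiv] at h
    · have := hcl u; have := hcr v; intro he; have := congrArg Fin.val he; omega
    · have := hcl v; have := hcr u; intro he; have := congrArg Fin.val he; omega
    · simp [subdiv] at h
  · rintro (v|e) _
    · -- original vertex: unique color 2 from matching edge
      obtain ⟨w, hw, hwu⟩ := hmatch (hspan v)
      have hG : G.Adj v w := M.adj_sub hw
      refine ⟨2, ⟨Sum.inr ⟨s(v,w), hG⟩, ⟨?_, ?_⟩, ?_⟩⟩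
      · simp [subdiv, neighborSet]
      · have : s(v,w) ∈ M.edgeSet := Subgraph.mem_edgeSet.mpr hw
        simp [hc, this]
      · rintro (u|e) ⟨hu, hcu⟩
        · exact absurd (hcl u) (by rw [hcu]; omega)
        · have hm : (e : Sym2 V) ∈ M.edgeSet := by
            by_contra h
            simp [hc, h] at hcu
          have hv : v ∈ (e : Sym2 V) := by
            simpa [subdiv, neighborSet] using hu
          obtain ⟨x, hx⟩ := Sym2.mem_iff_exists.mp hv
          have : M.Adj v x := Subgraph.mem_edgeSet.mp (hx ▸ hm)
          have hxw : x = w := hwu x this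
          congr 1
          exact Subtype.ext (by rw [hx, hxw])
    · -- subdivision vertex: endpoints have distinct colors
      obtain ⟨e, he⟩ := e
      induction e using Sym2.ind with
      | _ a b =>
        have hab : G.Adj a b := G.mem_edgeSet.mp he
        have hne : φ a ≠ φ b := φ.valid hab
        refine ⟨c (Sum.inl a), ⟨Sum.inl a, ⟨?_, rfl⟩, ?_⟩⟩
        · simp [subdiv, neighborSet]
        · rintro (u|f) ⟨hu, hcu⟩
          · have : u ∈ s(a,b) := by simpa [subdiv, neighborSet] using hu
            rcases Sym2.mem_iff.mp this with h | h
            · rw [h]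
            · exfalso
              apply hne
              apply Fin.ext
              have : (c (Sum.inl u)).val = (c (Sum.inl a)).val := by rw [hcu]
              simp only [hc] at this
              rw [h] at this
              exact this.symm
          · exact absurd (hcr f) (by rw [hcu]; have := hcl a; omega)
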